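/- For a finite dimensional Leibniz algebra h and a Leibniz algebra g, the set of Leibniz algebra homomorphisms g → h is in bijection with the set of k-algebra homomorphisms (characters) A(h,g) → k. -/

import Mathlib

open TensorProduct MvPolynomial

/-- The universal polynomial `P_{(a,i,j)} = Σ_u β^u_{ij} X_{au} - Σ_{s,t} τ^a_{st} X_{si} X_{tj}`. -/
noncomputable def univPoly {k : Type*} [Field k] {n : ℕ} {I : Type*}
    (τ : Fin n → Fin n → Fin n → k) (β : I → I → I →₀ k)
    (a : Fin n) (i j : I) : MvPolynomial (Fin n × I) k :=
  (β i j).sum (fun u c => C c * X (a, u)) -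
    ∑ s : Fin n, ∑ t : Fin n, C (τ s t a) * X (s, i) * X (t, j)

/-- The ideal generated by the universal polynomials. -/
noncomputable def univIdeal {k : Type*} [Field k] {n : ℕ} {I : Type*}
    (τ : Fin n → Fin n → Fin n → k) (β : I → I → I →₀ k) :
    Ideal (MvPolynomial (Fin n × I) k) :=
  Ideal.span (Set.range fun p : Fin n × I × I => univPoly τ β p.1 p.2.1 p.2.2)

/-- The universal algebra `A(h,g)`. -/
noncomputable abbrev univAlg {k : Type*} [Field k] {n : ℕ} {I : Type*}
    (τ : Fin n → Fin n → Fin n → k) (β : I → I → I →₀ k) :=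
  MvPolynomial (Fin n × I) k ⧸ univIdeal τ β

/-- The generator `x_{si}` of `A(h,g)`. -/
noncomputable def univGen {k : Type*} [Field k] {n : ℕ} {I : Type*}
    (τ : Fin n → Fin n → Fin n → k) (β : I → I → I →₀ k)
    (s : Fin n) (i : I) : univAlg τ β :=
  Ideal.Quotient.mk (univIdeal τ β) (X (s, i))

/-! A character `θ` of `A(h,g)` is a point `x = (x_{si})` of the zero locus of `J`, and `x` is
the matrix of `f = (Id_h ⊗ θ) ∘ η`. Conversely, evaluating `P_{(a,i,j)}` at the matrix of any
linear map `f : g → h` gives the `a`-th coordinate of `f [e_i, e_j] - [f e_i, f e_j]`; since both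
brackets are bilinear, `f` is a Leibniz morphism exactly when its matrix lies in the zero locus
of `J`, i.e. defines a character. The two constructions are inverse because a character is
determined by its values on the generators `x_{si}`. -/

namespace LeibnizUniversal

section Expansion

variable {k : Type*} [CommSemiring k] {M : Type*} [AddCommMonoid M] [Module k M]

lemma finsupp_linearMap_apply_eq_sum {I : Type*} (f : (I →₀ k) →ₗ[k] M) (v : I →₀ k) :
    f v = v.sum fun u c => c • f (Finsupp.single u 1) := by
  conv_lhs => rw [← v.sum_single]
  simp only [Finsupp.sum, map_sum, ← Finsupp.smul_single_one _ (v _), map_smul]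

lemma pi_bilin_apply_eq_sum {n : ℕ} (B : (Fin n → k) →ₗ[k] (Fin n → k) →ₗ[k] M)
    (x y : Fin n → k) :
    B x y = ∑ s, ∑ t, (x s * y t) • B (Pi.single s 1) (Pi.single t 1) := by
  conv_lhs => rw [pi_eq_sum_univ' x, pi_eq_sum_univ' y]
  simp only [map_sum, map_smul, LinearMap.sum_apply, LinearMap.smul_apply, Finset.smul_sum,
    smul_smul, mul_comm (y _)]
  exact Finset.sum_comm

lemma finsupp_map_bilin_of_single {I : Type*}
    (f : (I →₀ k) →ₗ[k] M) (B : (I →₀ k) →ₗ[k] (I →₀ k) →ₗ[k] (I →₀ k))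
    (B' : M →ₗ[k] M →ₗ[k] M)
    (h : ∀ i j, f (B (Finsupp.single i 1) (Finsupp.single j 1)) =
      B' (f (Finsupp.single i 1)) (f (Finsupp.single j 1))) (u v : I →₀ k) :
    f (B u v) = B' (f u) (f v) := by
  have : B.compr₂ f = B'.compl₁₂ f f :=
    LinearMap.ext_basis Finsupp.basisSingleOne Finsupp.basisSingleOne (by simpa using h)
  exact LinearMap.congr_fun₂ this u v

end Expansion

section UniversalAlgebra

variable {k : Type*} [Field k] {n : ℕ} {I : Type*}
  {τ : Fin n → Fin n → Fin n → k} {β : I → I → I →₀ k}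

noncomputable def pointOf (f : (I →₀ k) →ₗ[k] (Fin n → k)) : Fin n × I → k :=
  fun p => f (Finsupp.single p.2 1) p.1

lemma aeval_pointOf_univPoly {bH : (Fin n → k) →ₗ[k] (Fin n → k) →ₗ[k] (Fin n → k)}
    (hbH : ∀ i j : Fin n, bH (Pi.single i 1) (Pi.single j 1) = fun s => τ i j s)
    (f : (I →₀ k) →ₗ[k] (Fin n → k)) (a : Fin n) (i j : I) :
    aeval (pointOf f) (univPoly τ β a i j) =
      (f (β i j) - bH (f (Finsupp.single i 1)) (f (Finsupp.single j 1))) a := by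
  rw [Pi.sub_apply, finsupp_linearMap_apply_eq_sum f, pi_bilin_apply_eq_sum]
  simp [univPoly, pointOf, hbH, Finsupp.sum, Finset.sum_apply, mul_comm, mul_left_comm]

lemma map_bracket_iff_aeval_pointOf_eq_zero
    {bH : (Fin n → k) →ₗ[k] (Fin n → k) →ₗ[k] (Fin n → k)}
    (hbH : ∀ i j : Fin n, bH (Pi.single i 1) (Pi.single j 1) = fun s => τ i j s)
    {bG : (I →₀ k) →ₗ[k] (I →₀ k) →ₗ[k] (I →₀ k)}
    (hbG : ∀ i j : I, bG (Finsupp.single i 1) (Finsupp.single j 1) = β i j)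
    (f : (I →₀ k) →ₗ[k] (Fin n → k)) :
    (∀ u v, f (bG u v) = bH (f u) (f v)) ↔
      ∀ x ∈ univIdeal τ β, aeval (pointOf f) x = 0 := by
  constructor
  · intro hf
    suffices univIdeal τ β ≤ RingHom.ker (aeval (pointOf f)) from fun x hx => this hx
    refine Ideal.span_le.2 ?_
    rintro _ ⟨⟨a, i, j⟩, rfl⟩
    rw [SetLike.mem_coe, RingHom.mem_ker, aeval_pointOf_univPoly hbH, ← hbG, hf, sub_self,
      Pi.zero_apply]
  · intro hJ
    refine finsupp_map_bilin_of_single f bG bH fun i j => funext fun a => ?_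
    have := hJ _ (Ideal.subset_span ⟨(a, i, j), rfl⟩)
    rwa [aeval_pointOf_univPoly hbH, Pi.sub_apply, sub_eq_zero, ← hbG] at this

noncomputable def homOfChar (η : (I →₀ k) →ₗ[k] (Fin n → k) ⊗[k] univAlg τ β)
    (θ : univAlg τ β →ₐ[k] k) : (I →₀ k) →ₗ[k] (Fin n → k) :=
  (TensorProduct.rid k (Fin n → k)).toLinearMap ∘ₗ
    TensorProduct.map LinearMap.id θ.toLinearMap ∘ₗ η

variable {η : (I →₀ k) →ₗ[k] (Fin n → k) ⊗[k] univAlg τ β}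

lemma homOfChar_single
    (hη : ∀ i : I, η (Finsupp.single i 1) =
      ∑ s : Fin n, Pi.single s 1 ⊗ₜ[k] univGen τ β s i)
    (θ : univAlg τ β →ₐ[k] k) (i : I) :
    homOfChar η θ (Finsupp.single i 1) = fun s => θ (univGen τ β s i) := by
  simp only [homOfChar, LinearMap.comp_apply, hη, map_sum, TensorProduct.map_tmul,
    LinearMap.id_apply, AlgHom.toLinearMap_apply, LinearEquiv.coe_coe, TensorProduct.rid_tmul]
  rw [← pi_eq_sum_univ']

lemma comp_mk_eq_aeval_pointOf_homOfChar
    (hη : ∀ i : I, η (Finsupp.single i 1) =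
      ∑ s : Fin n, Pi.single s 1 ⊗ₜ[k] univGen τ β s i)
    (θ : univAlg τ β →ₐ[k] k) :
    θ.comp (Ideal.Quotient.mkₐ k (univIdeal τ β)) = aeval (pointOf (homOfChar η θ)) := by
  ext ⟨s, i⟩
  simp [pointOf, homOfChar_single hη, univGen]

lemma homOfChar_injective
    (hη : ∀ i : I, η (Finsupp.single i 1) =
      ∑ s : Fin n, Pi.single s 1 ⊗ₜ[k] univGen τ β s i) :
    Function.Injective (homOfChar η) := fun θ θ' h =>
  Ideal.Quotient.algHom_ext k <| by
    rw [comp_mk_eq_aeval_pointOf_homOfChar hη, comp_mk_eq_aeval_pointOf_homOfChar hη, h]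

lemma aeval_pointOf_homOfChar_eq_zero
    (hη : ∀ i : I, η (Finsupp.single i 1) =
      ∑ s : Fin n, Pi.single s 1 ⊗ₜ[k] univGen τ β s i)
    (θ : univAlg τ β →ₐ[k] k) {x : MvPolynomial (Fin n × I) k}
    (hx : x ∈ univIdeal τ β) :
    aeval (pointOf (homOfChar η θ)) x = 0 := by
  rw [← comp_mk_eq_aeval_pointOf_homOfChar hη, AlgHom.comp_apply, Ideal.Quotient.mkₐ_eq_mk,
    Ideal.Quotient.eq_zero_iff_mem.mpr hx, map_zero]

lemma homOfChar_liftₐ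
    (hη : ∀ i : I, η (Finsupp.single i 1) =
      ∑ s : Fin n, Pi.single s 1 ⊗ₜ[k] univGen τ β s i)
    (f : (I →₀ k) →ₗ[k] (Fin n → k))
    (hf : ∀ x ∈ univIdeal τ β, aeval (pointOf f) x = 0) :
    homOfChar η (Ideal.Quotient.liftₐ _ (aeval (pointOf f)) hf) = f := by
  refine Finsupp.lhom_ext' fun i => LinearMap.ext_ring ?_
  rw [LinearMap.comp_apply, Finsupp.lsingle_apply, homOfChar_single hη]
  funext s
  simp [univGen, pointOf]

end UniversalAlgebra

end LeibnizUniversal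

open LeibnizUniversal in
theorem stmt_4 (k : Type*) [Field k] (n : ℕ) (I : Type*)
    (τ : Fin n → Fin n → Fin n → k) (β : I → I → I →₀ k)
    (bH : (Fin n → k) →ₗ[k] (Fin n → k) →ₗ[k] (Fin n → k))
    (hbH : ∀ i j : Fin n, bH (Pi.single i 1) (Pi.single j 1) = fun s => τ i j s)
    (bG : (I →₀ k) →ₗ[k] (I →₀ k) →ₗ[k] (I →₀ k))
    (hbG : ∀ i j : I, bG (Finsupp.single i 1) (Finsupp.single j 1) = β i j)
    (η : (I →₀ k) →ₗ[k] (Fin n → k) ⊗[k] univAlg τ β)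
    (hη : ∀ i : I, η (Finsupp.single i 1) =
      ∑ s : Fin n, Pi.single s 1 ⊗ₜ[k] univGen τ β s i) :
    (∀ θ : univAlg τ β →ₐ[k] k, ∀ u v : I →₀ k,
      ((TensorProduct.rid k (Fin n → k)).toLinearMap ∘ₗ
          TensorProduct.map LinearMap.id θ.toLinearMap ∘ₗ η) (bG u v) =
        bH (((TensorProduct.rid k (Fin n → k)).toLinearMap ∘ₗ
              TensorProduct.map LinearMap.id θ.toLinearMap ∘ₗ η) u)
           (((TensorProduct.rid k (Fin n → k)).toLinearMap ∘ₗ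
              TensorProduct.map LinearMap.id θ.toLinearMap ∘ₗ η) v)) ∧
    (∀ f : (I →₀ k) →ₗ[k] (Fin n → k),
      (∀ u v : I →₀ k, f (bG u v) = bH (f u) (f v)) →
        ∃! θ : univAlg τ β →ₐ[k] k,
          (TensorProduct.rid k (Fin n → k)).toLinearMap ∘ₗ
            TensorProduct.map LinearMap.id θ.toLinearMap ∘ₗ η = f) := by
  refine ⟨fun θ => ?_, fun f hf => ?_⟩
  · exact (map_bracket_iff_aeval_pointOf_eq_zero hbH hbG (homOfChar η θ)).2
      fun _ => aeval_pointOf_homOfChar_eq_zero hη θ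
  · have hJ := (map_bracket_iff_aeval_pointOf_eq_zero hbH hbG f).1 hf
    refine ⟨Ideal.Quotient.liftₐ _ (aeval (pointOf f)) hJ, homOfChar_liftₐ hη f hJ,
      fun θ hθ => homOfChar_injective hη (hθ.trans (homOfChar_liftₐ hη f hJ).symm)⟩
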